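/- Fix an integer n ≥ 2 and let G = BS(1,n) be the subgroup of Homeo₊(ℝ) generated by a(x) = n·x and b(x) = x + 1. Let N be a normal subgroup of G with N ≠ {id}, and suppose the quotient group G/N is torsion-free. Then b ∈ N; moreover, if N ≠ G, then G/N is infinite cyclic. -/

import Mathlib

open Set Topology

/-- The group of self-homeomorphisms of `X`, with `(f * g) x = f (g x)`. -/
instance {X : Type*} [TopologicalSpace X] : Group (X ≃ₜ X) where
  mul f g := g.trans f
  one := Homeomorph.refl X
  inv := Homeomorph.symm
  mul_assoc _ _ _ := Homeomorph.ext fun _ => rfl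
  one_mul _ := Homeomorph.ext fun _ => rfl
  mul_one _ := Homeomorph.ext fun _ => rfl
  inv_mul_cancel f := Homeomorph.ext fun x => f.symm_apply_apply x

/-- The support of a homeomorphism: the closure of the set of non-fixed points. -/
def Supp (f : ℝ ≃ₜ ℝ) : Set ℝ := closure {x | f x ≠ x}

/-- The homeomorphism `x ↦ n·x` of `ℝ`. -/
noncomputable def dilation (n : ℕ) (hn : 2 ≤ n) : ℝ ≃ₜ ℝ :=
  Homeomorph.mulLeft₀ (n : ℝ) (by positivity)

/-- The homeomorphism `x ↦ x + t` of `ℝ`. -/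
noncomputable def translation (t : ℝ) : ℝ ≃ₜ ℝ := Homeomorph.addRight t

/-- The standard affine Baumslag–Solitar group `BS(1,n)`, generated by `x ↦ n·x`
and `x ↦ x + 1`, as a subgroup of the homeomorphism group of `ℝ`. -/
noncomputable def BSgroup (n : ℕ) (hn : 2 ≤ n) : Subgroup (ℝ ≃ₜ ℝ) :=
  Subgroup.closure {dilation n hn, translation 1}

/-- A monoid is torsion-free if its only element of finite order is the identity
(the definition `Monoid.IsTorsionFree` of the older Mathlib, since removed). -/
def Monoid.IsTorsionFree (G : Type*) [Monoid G] : Prop :=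
  ∀ g : G, g ≠ 1 → ¬IsOfFinOrder g

/-!
Every element of `BS(1,n)` acts as `x ↦ nᵏ x + t` with `t ∈ ℤ[1/n]`. A nontrivial normal
subgroup `N` therefore contains a nontrivial translation: the element itself when `k = 0`,
otherwise its commutator with `b`, which translates by `nᵏ - 1`. Conjugating a translation by
`s / nʲ` with `aʲ` gives `bˢ ∈ N`, so `b ∈ N` once `G ⧸ N` is torsion-free. Then `G ⧸ N` is
generated by the image of `a`, which has infinite order unless `N = G`.
-/

namespace Monoid.IsTorsionFree

variable {G : Type*} [Group G]

lemma eq_one_of_zpow_eq_one (htf : Monoid.IsTorsionFree G) {g : G} {s : ℤ} (hs : s ≠ 0)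
    (hg : g ^ s = 1) : g = 1 := by
  by_contra hg1
  exact htf g hg1 (isOfFinOrder_iff_zpow_eq_one.2 ⟨s, hs, hg⟩)

lemma mem_of_zpow_mem {N : Subgroup G} [N.Normal] (htf : Monoid.IsTorsionFree (G ⧸ N)) {g : G}
    {s : ℤ} (hs : s ≠ 0) (hg : g ^ s ∈ N) : g ∈ N := by
  rw [← QuotientGroup.eq_one_iff] at hg ⊢
  exact htf.eq_one_of_zpow_eq_one hs hg

lemma nonempty_mulEquiv_int (htf : Monoid.IsTorsionFree G) {g : G} (hg1 : g ≠ 1)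
    (hg : Subgroup.zpowers g = ⊤) : Nonempty (G ≃* Multiplicative ℤ) := by
  have : Infinite G :=
    Infinite.of_injective _ (injective_zpow_iff_not_isOfFinOrder.2 (htf g hg1))
  exact ⟨(intEquivOfZPowersEqTop g hg).symm⟩

end Monoid.IsTorsionFree

lemma QuotientGroup.zpowers_mk_eq_top {G : Type*} [Group G] {N : Subgroup G} [N.Normal]
    {x y : G} (hxy : Subgroup.closure {x, y} = ⊤) (hy : y ∈ N) :
    Subgroup.zpowers (x : G ⧸ N) = ⊤ := by
  rw [← Subgroup.map_top_of_surjective _ (QuotientGroup.mk'_surjective N), ← hxy,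
    MonoidHom.map_closure, Set.image_pair, QuotientGroup.mk'_apply, QuotientGroup.mk'_apply,
    (QuotientGroup.eq_one_iff y).2 hy, Set.pair_comm, Subgroup.closure_insert_one,
    Subgroup.zpowers_eq_closure]

def intAdjoinInv (n : ℕ) : Subring ℝ := Subring.closure {(n : ℝ)⁻¹}

lemma zpow_mem_intAdjoinInv (n : ℕ) (k : ℤ) : (n : ℝ) ^ k ∈ intAdjoinInv n := by
  cases k with
  | ofNat j =>
    rw [Int.ofNat_eq_natCast, zpow_natCast]
    exact pow_mem (natCast_mem _ n) j
  | negSucc j =>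
    rw [zpow_negSucc, ← inv_pow]
    exact pow_mem (Subring.subset_closure (Set.mem_singleton _)) _

lemma exists_pow_mul_eq_intCast {n : ℕ} {t : ℝ} (ht : t ∈ intAdjoinInv n) :
    ∃ (j : ℕ) (s : ℤ), (n : ℝ) ^ j * t = s := by
  induction ht using Subring.closure_induction with
  | mem t ht =>
    -- `n² · n⁻¹ = n` holds also for `n = 0`.
    refine ⟨2, n, ?_⟩
    rw [Set.mem_singleton_iff.1 ht, Int.cast_natCast]
    rcases eq_or_ne (n : ℝ) 0 with h | h
    · simp [h]
    · field_simp
  | zero => exact ⟨0, 0, by simp⟩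
  | one => exact ⟨0, 1, by simp⟩
  | add t u _ _ iht ihu =>
    obtain ⟨j, s, hs⟩ := iht
    obtain ⟨l, r, hr⟩ := ihu
    refine ⟨j + l, s * n ^ l + r * n ^ j, ?_⟩
    push_cast
    rw [← hs, ← hr]
    ring
  | neg t _ iht =>
    obtain ⟨j, s, hs⟩ := iht
    exact ⟨j, -s, by push_cast; rw [← hs]; ring⟩
  | mul t u _ _ iht ihu =>
    obtain ⟨j, s, hs⟩ := iht
    obtain ⟨l, r, hr⟩ := ihu
    refine ⟨j + l, s * r, ?_⟩
    push_cast
    rw [← hs, ← hr]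
    ring

@[simp]
lemma translation_apply (t x : ℝ) : translation t x = x + t := rfl

@[simp]
lemma dilation_apply {n : ℕ} (hn : 2 ≤ n) (x : ℝ) : dilation n hn x = n * x := rfl

lemma translation_zero : translation 0 = 1 :=
  Homeomorph.ext fun x => add_zero x

lemma translation_mul (t u : ℝ) : translation t * translation u = translation (t + u) :=
  Homeomorph.ext fun x => by simp [add_assoc, add_comm u]

lemma translation_inv (t : ℝ) : (translation t)⁻¹ = translation (-t) :=
  inv_eq_of_mul_eq_one_right (by rw [translation_mul, add_neg_cancel, translation_zero])

lemma translation_zpow (t : ℝ) (k : ℤ) : translation t ^ k = translation (k * t) := by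
  induction k using Int.induction_on with
  | zero => rw [zpow_zero, Int.cast_zero, zero_mul, translation_zero]
  | succ k ih => rw [zpow_add_one, ih, translation_mul]; push_cast; ring_nf
  | pred k ih => rw [zpow_sub_one, ih, translation_inv, translation_mul]; push_cast; ring_nf

lemma mul_translation_mul_inv {g : ℝ ≃ₜ ℝ} {c t : ℝ} (hg : ∀ x, g x = c * x + t) (u : ℝ) :
    g * translation u * g⁻¹ = translation (c * u) := Homeomorph.ext fun x => by
  have hx : c * g.symm x + t = x := by rw [← hg]; exact g.apply_symm_apply x
  simp only [Homeomorph.mul_apply, Homeomorph.inv_apply, translation_apply, hg]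
  linarith

lemma dilation_pow_apply {n : ℕ} (hn : 2 ≤ n) (j : ℕ) (x : ℝ) :
    (dilation n hn ^ j) x = (n : ℝ) ^ j * x := by
  induction j with
  | zero => simp
  | succ j ih => rw [pow_succ', Homeomorph.mul_apply, ih, dilation_apply, pow_succ', mul_assoc]

def affineSubgroup (n : ℕ) [NeZero n] : Subgroup (ℝ ≃ₜ ℝ) where
  carrier := {g | ∃ k : ℤ, ∃ t ∈ intAdjoinInv n, ∀ x, g x = (n : ℝ) ^ k * x + t}
  one_mem' := ⟨0, 0, zero_mem _, fun x => by simp⟩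
  mul_mem' := by
    rintro f g ⟨k, t, ht, hf⟩ ⟨l, u, hu, hg⟩
    refine ⟨k + l, n ^ k * u + t, add_mem (mul_mem (zpow_mem_intAdjoinInv n k) hu) ht,
      fun x => ?_⟩
    rw [Homeomorph.mul_apply, hg, hf, zpow_add₀ (Nat.cast_ne_zero.2 (NeZero.ne n))]
    ring
  inv_mem' := by
    rintro g ⟨k, t, ht, hg⟩
    refine ⟨-k, -(n ^ (-k) * t), neg_mem (mul_mem (zpow_mem_intAdjoinInv n _) ht), fun y => ?_⟩
    have hy : y = n ^ k * g.symm y + t := by rw [← hg, g.apply_symm_apply]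
    have hnk : (n : ℝ) ^ k ≠ 0 := zpow_ne_zero _ (Nat.cast_ne_zero.2 (NeZero.ne n))
    rw [Homeomorph.inv_apply, zpow_neg]
    conv_rhs => rw [hy]
    field_simp
    ring

lemma BSgroup_le_affineSubgroup (n : ℕ) [NeZero n] (hn : 2 ≤ n) :
    BSgroup n hn ≤ affineSubgroup n := by
  refine (Subgroup.closure_le _).2 (Set.insert_subset ?_ (Set.singleton_subset_iff.2 ?_))
  · exact ⟨1, 0, zero_mem _, fun x => by simp⟩
  · exact ⟨0, 1, one_mem _, fun x => by simp⟩

namespace BSgroup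

variable {n : ℕ} {hn : 2 ≤ n}

noncomputable def a (n : ℕ) (hn : 2 ≤ n) : BSgroup n hn :=
  ⟨dilation n hn, Subgroup.subset_closure (Set.mem_insert _ _)⟩

noncomputable def b (n : ℕ) (hn : 2 ≤ n) : BSgroup n hn :=
  ⟨translation 1, Subgroup.subset_closure (Set.mem_insert_of_mem _ rfl)⟩

lemma closure_a_b : Subgroup.closure {a n hn, b n hn} = ⊤ := by
  have h : ((↑) : BSgroup n hn → ℝ ≃ₜ ℝ) ⁻¹' {dilation n hn, translation 1} =
      {a n hn, b n hn} := by
    ext x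
    simp [Subtype.ext_iff, a, b]
  rw [← h]
  exact Subgroup.closure_closure_coe_preimage

lemma exists_translation_mem_of_ne_bot {N : Subgroup (BSgroup n hn)} [hN : N.Normal]
    (hbot : N ≠ ⊥) :
    ∃ h ∈ N, ∃ t ∈ intAdjoinInv n, t ≠ 0 ∧ (h : ℝ ≃ₜ ℝ) = translation t := by
  have : NeZero n := ⟨by omega⟩
  obtain ⟨⟨g, hgN⟩, hg1⟩ := Subgroup.ne_bot_iff_exists_ne_one.1 hbot
  obtain ⟨k, t, ht, hg⟩ := BSgroup_le_affineSubgroup n hn g.2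
  rcases eq_or_ne k 0 with rfl | hk
  · have hgt : (g : ℝ ≃ₜ ℝ) = translation t := Homeomorph.ext fun x => by simp [hg, add_comm]
    refine ⟨g, hgN, t, ht, ?_, hgt⟩
    rintro rfl
    exact hg1 (Subtype.ext (Subtype.ext (hgt.trans translation_zero)))
  -- The commutator `[g, b]` translates by `nᵏ - 1`.
  refine ⟨g * b n hn * g⁻¹ * (b n hn)⁻¹, ?_, n ^ k - 1,
    sub_mem (zpow_mem_intAdjoinInv n k) (one_mem _), ?_, ?_⟩
  · simpa only [mul_assoc] using N.mul_mem hgN (hN.conj_mem _ (N.inv_mem hgN) (b n hn))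
  · have hn1 : (1 : ℝ) < n := by exact_mod_cast hn
    exact sub_ne_zero.2 fun h => hk ((zpow_eq_one_iff_right₀ (by positivity) hn1.ne').1 h)
  · change (g : ℝ ≃ₜ ℝ) * translation 1 * (g : ℝ ≃ₜ ℝ)⁻¹ * (translation 1)⁻¹ = _
    rw [mul_translation_mul_inv hg, translation_inv, translation_mul, mul_one, sub_eq_add_neg]

lemma exists_zpow_b_mem_of_ne_bot {N : Subgroup (BSgroup n hn)} [hN : N.Normal] (hbot : N ≠ ⊥) :
    ∃ s : ℤ, s ≠ 0 ∧ b n hn ^ s ∈ N := by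
  obtain ⟨h, hhN, t, ht, ht0, hh⟩ := exists_translation_mem_of_ne_bot hbot
  obtain ⟨j, s, hs⟩ := exists_pow_mul_eq_intCast ht
  have hn0 : (n : ℝ) ≠ 0 := by positivity
  refine ⟨s, by exact_mod_cast hs ▸ mul_ne_zero (pow_ne_zero j hn0) ht0, ?_⟩
  have hconj : a n hn ^ j * h * (a n hn ^ j)⁻¹ = b n hn ^ s := by
    ext x
    change (dilation n hn ^ j * (h : ℝ ≃ₜ ℝ) * (dilation n hn ^ j)⁻¹) x = (translation 1 ^ s) x
    rw [hh, mul_translation_mul_inv (fun x => by rw [dilation_pow_apply, add_zero]), hs,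
      translation_zpow, mul_one]
  exact hconj ▸ hN.conj_mem h hhN _

end BSgroup

theorem BS_torsion_free_quotients
    (n : ℕ) (hn : 2 ≤ n)
    (N : Subgroup ↥(BSgroup n hn)) [hN : N.Normal]
    (hbot : N ≠ ⊥)
    (htf : Monoid.IsTorsionFree (↥(BSgroup n hn) ⧸ N)) :
    (⟨translation 1, Subgroup.subset_closure (Set.mem_insert_of_mem _ rfl)⟩ :
        ↥(BSgroup n hn)) ∈ N ∧
      (N ≠ ⊤ → Nonempty ((↥(BSgroup n hn) ⧸ N) ≃* Multiplicative ℤ)) := by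
  have hbN : BSgroup.b n hn ∈ N := by
    obtain ⟨s, hs, hbs⟩ := BSgroup.exists_zpow_b_mem_of_ne_bot hbot
    exact htf.mem_of_zpow_mem hs hbs
  refine ⟨hbN, fun htop => ?_⟩
  have haN : BSgroup.a n hn ∉ N := fun haN => htop <| eq_top_iff.2 <|
    BSgroup.closure_a_b ▸ (Subgroup.closure_le N).2 (Set.pair_subset haN hbN)
  exact htf.nonempty_mulEquiv_int ((QuotientGroup.eq_one_iff _).not.2 haN)
    (QuotientGroup.zpowers_mk_eq_top BSgroup.closure_a_b hbN)
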